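/- arXiv:2309.16810 — 3 statements merged into one kernel-verified Lean document; each statement's English description precedes it below -/
import Mathlib

section
/- Let I ⊆ R = K[x_1,...,x_n] be a monomial ideal generated in a single degree d that has a d-linear resolution. For a variable x, let I' be the monomial ideal whose minimal generating set is obtained from that of I by deleting all minimal generators divisible by x. Then I' is either the zero ideal or again has a d-linear resolution. -/
open MvPolynomial Module

noncomputable section

/-- The polynomial ring `K[x_1, ..., x_n]`. -/
abbrev PolyR (K : Type) [Field K] (n : ℕ) : Type := MvPolynomial (Fin n) K

variable (K : Type) [Field K] (n : ℕ)

/-- The Koszul differential on `K(x_1,...,x_n) ⊗ R`, where homological degree `i`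
elements are encoded as functions on `Finset (Fin n)` supported on sets of card `i`. -/
def kDiff : (Finset (Fin n) → PolyR K n) →ₗ[K] (Finset (Fin n) → PolyR K n) where
  toFun f T := ∑ k ∈ Tᶜ,
      ((-1 : ℤ) ^ (((insert k T).filter (fun j => j < k)).card)) • (X k * f (insert k T))
  map_add' f g := by
    funext T
    simp [mul_add, smul_add, Finset.sum_add_distrib]
  map_smul' c f := by
    funext T
    simp [Finset.smul_sum, mul_smul_comm, smul_comm c]

/-- The internal-degree-`j`, homological-degree-`i` component of the Koszul complex
of the ideal `I`: functions supported on subsets of cardinality `i`, whose values lie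
in `I` and are homogeneous of degree `j - i`. -/
def kosC (I : Ideal (PolyR K n)) (i j : ℕ) : Submodule K (Finset (Fin n) → PolyR K n) :=
  if i ≤ j then
    ⨅ S : Finset (Fin n),
      Submodule.comap (LinearMap.proj S)
        (if S.card = i then
            (Submodule.restrictScalars K I ⊓ homogeneousSubmodule (Fin n) K (j - i))
          else ⊥)
  else ⊥

/-- The graded Betti number `β_{i,j}(I) = dim_K Tor_i(I, K)_j`, computed as the dimension of
the `(i,j)`-th graded piece of the homology of the Koszul complex `K(x_1,...,x_n) ⊗ I`. -/
def bettiNum (I : Ideal (PolyR K n)) (i j : ℕ) : ℕ :=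
  finrank K ↥(kosC K n I i j ⊓ LinearMap.ker (kDiff K n))
    - finrank K ↥(Submodule.map (kDiff K n) (kosC K n I (i + 1) j)
        ⊓ (kosC K n I i j ⊓ LinearMap.ker (kDiff K n)))

/-- The Castelnuovo–Mumford regularity of a homogeneous ideal `I ⊆ K[x_1,...,x_n]`:
`reg I = max { j - i | β_{i,j}(I) ≠ 0 }`. -/
def CMreg (I : Ideal (PolyR K n)) : ℕ :=
  sSup {d : ℕ | ∃ i j : ℕ, bettiNum K n I i j ≠ 0 ∧ d = j - i}

/-- `I_⟨d⟩`: the ideal generated by the degree-`d` homogeneous component of `I`. -/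
def idealComponent (I : Ideal (PolyR K n)) (d : ℕ) : Ideal (PolyR K n) :=
  Ideal.span ((I : Set (PolyR K n)) ∩ {f | f.IsHomogeneous d})

/-- An ideal is componentwise linear if for every `d ≥ 0` the ideal `I_⟨d⟩` is zero or
has a `d`-linear resolution (equivalently, `reg (I_⟨d⟩) = d`). -/
def ComponentwiseLinear (I : Ideal (PolyR K n)) : Prop :=
  ∀ d : ℕ, idealComponent K n I d = ⊥ ∨ CMreg K n (idealComponent K n I d) = d

/-- A monomial ideal is an ideal generated by monomials. -/
def IsMonomialIdeal (I : Ideal (PolyR K n)) : Prop :=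
  ∃ A : Set (Fin n →₀ ℕ), I = Ideal.span ((fun a => monomial a (1 : K)) '' A)

/-- The set `G(I)` of (exponent vectors of) the minimal monomial generators of `I`:
monomials in `I` which are not divisible by any other monomial of `I`. -/
def minMonomialGens (I : Ideal (PolyR K n)) : Set (Fin n →₀ ℕ) :=
  {a | (monomial a (1 : K)) ∈ I ∧
    ∀ b : Fin n →₀ ℕ, b ≤ a → b ≠ a → (monomial b (1 : K)) ∉ I}

/-- Vertex splittable monomial ideals (Moradi–Khosh-Ahang):
`I = (v)`, `I = 0`, `I = R`, or `I = x I₁ + I₂` where `I₁, I₂` are vertex splittable ideals in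
`K[X ∖ {x}]`, `I₂ ⊆ I₁`, and `G(I)` is the disjoint union of `G(xI₁)` and `G(I₂)`. -/
inductive VertexSplittable : Ideal (PolyR K n) → Prop
  | principal (a : Fin n →₀ ℕ) : VertexSplittable (Ideal.span {(monomial a (1 : K) : PolyR K n)})
  | bot : VertexSplittable ⊥
  | top : VertexSplittable ⊤
  | split (x : Fin n) (I₁ I₂ : Ideal (PolyR K n)) :
      VertexSplittable I₁ → VertexSplittable I₂ →
      (∀ a ∈ minMonomialGens K n I₁, a x = 0) →
      (∀ a ∈ minMonomialGens K n I₂, a x = 0) →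
      I₂ ≤ I₁ →
      minMonomialGens K n (Ideal.span {(X x : PolyR K n)} * I₁ + I₂) =
        ((fun a => a + Finsupp.single x 1) '' minMonomialGens K n I₁) ∪
          minMonomialGens K n I₂ →
      Disjoint ((fun a => a + Finsupp.single x 1) '' minMonomialGens K n I₁)
        (minMonomialGens K n I₂) →
      VertexSplittable (Ideal.span {(X x : PolyR K n)} * I₁ + I₂)

/-- A monomial ideal has linear quotients if its minimal monomial generators can be
ordered `u_1, ..., u_m` so that each colon ideal `((u_1,...,u_{i-1}) : u_i)` is generated by
a subset of the variables. -/
def HasLinearQuotients (I : Ideal (PolyR K n)) : Prop :=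
  ∃ (m : ℕ) (u : Fin m → (Fin n →₀ ℕ)),
    Function.Injective u ∧
    minMonomialGens K n I = Set.range u ∧
    ∀ i : Fin m, 0 < (i : ℕ) →
      ∃ S : Set (Fin n),
        Submodule.colon
            (Ideal.span ((fun j : Fin m => (monomial (u j) (1 : K) : PolyR K n)) ''
              {j : Fin m | (j : ℕ) < (i : ℕ)}))
            (Ideal.span {(monomial (u i) (1 : K) : PolyR K n)}) =
          Ideal.span ((fun v => (X v : PolyR K n)) '' S)

/-- A weighted oriented graph on the vertex set `{x_1, ..., x_n}`: a set of directed edges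
(ordered pairs of distinct vertices) together with a weight function `w : V → ℤ_{≥1}`. -/
structure WOGraph (n : ℕ) where
  E : Set (Fin n × Fin n)
  w : Fin n → ℕ
  loopless : ∀ v, (v, v) ∉ E
  one_le_w : ∀ v, 1 ≤ w v

/-- The edge ideal `I(D) = (x y^{w(y)} : (x,y) ∈ E(D))` of a weighted oriented graph. -/
def edgeIdeal (D : WOGraph n) : Ideal (PolyR K n) :=
  Ideal.span {m : PolyR K n | ∃ e ∈ D.E, m = X e.1 * X e.2 ^ D.w e.2}

/-- The underlying simple graph of a weighted oriented graph. -/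
def underlying (D : WOGraph n) : SimpleGraph (Fin n) where
  Adj x y := x ≠ y ∧ ((x, y) ∈ D.E ∨ (y, x) ∈ D.E)
  symm := ⟨fun x y h => ⟨h.1.symm, h.2.symm⟩⟩
  loopless := ⟨fun x h => h.1 rfl⟩

/-- The simple graph `H(I(D)_⟨2⟩)`, whose edges are the pairs `{x,y}` with `xy ∈ I(D)`,
so that `I(H) = I(D)_⟨2⟩`. -/
def Hgraph (D : WOGraph n) : SimpleGraph (Fin n) where
  Adj x y := x ≠ y ∧ (X x * X y : PolyR K n) ∈ edgeIdeal K n D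
  symm := ⟨fun x y h => ⟨h.1.symm, by rw [mul_comm]; exact h.2⟩⟩
  loopless := ⟨fun x h => h.1 rfl⟩

/-- `f : Fin k → V` is an induced cycle of length `k` in `G`: `f` is injective and the
adjacencies among its image are exactly the consecutive (cyclic) ones. -/
def IsInducedCycle {V : Type} (G : SimpleGraph V) (k : ℕ) (f : Fin k → V) : Prop :=
  Function.Injective f ∧
    ∀ a b : Fin k, G.Adj (f a) (f b) ↔
      (((a : ℕ) + 1) % k = (b : ℕ) ∨ ((b : ℕ) + 1) % k = (a : ℕ))

/-- A simple graph is chordal if it has no induced cycle of length `≥ 4`. -/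
def Chordal {V : Type} (G : SimpleGraph V) : Prop :=
  ∀ k : ℕ, 4 ≤ k → ∀ f : Fin k → V, ¬ IsInducedCycle G k f

/-- A vertex cover of `G`: a set of vertices meeting every edge. -/
def IsVertexCover {V : Type} (G : SimpleGraph V) (C : Set V) : Prop :=
  ∀ ⦃x y : V⦄, G.Adj x y → x ∈ C ∨ y ∈ C

/-- A minimal vertex cover: a vertex cover minimal with respect to inclusion. -/
def IsMinimalVertexCover {V : Type} (G : SimpleGraph V) (C : Set V) : Prop :=
  IsVertexCover G C ∧ ∀ C' ⊆ C, IsVertexCover G C' → C' = C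

end

/-!
Let `π = chainModX x` be the operator on Koszul chains that kills the faces containing `x` and
keeps, on the other faces, only the terms not divisible by `x`. It commutes with the differential,
and since `I` is monomial it maps the Koszul complex of `I` into that of the deletion `I'`. A cycle
`f` of `I'` splits as `π f + (f - π f)`. If `β_{i,j}(I) = 0`, the cycle `π f` bounds some `g` in the
complex of `I`, hence bounds `π g` in that of `I'`. On chains with `π`-part zero, dividing by `x`
and wedging with `e_x` (`chainDivX x`) is a contracting homotopy; it preserves `I'` because `I'` is
generated by monomials free of `x`, so `f - π f` is a boundary as well. Thus `β_{i,j}(I') = 0`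
whenever `β_{i,j}(I) = 0`, which bounds `reg I'` by `d`, while a minimal generator of degree `d`
free of `x` gives `β_{0,d}(I') ≠ 0`.
-/

namespace MvPolynomial

variable {σ R : Type*} [CommRing R] (x : σ)

lemma coeff_modMonomial_single (p : MvPolynomial σ R) (a : σ →₀ ℕ) :
    coeff a (p.modMonomial (Finsupp.single x 1)) = if a x = 0 then coeff a p else 0 := by
  split_ifs with h
  · exact coeff_modMonomial_of_not_le p (by simp [Finsupp.single_le_iff, h])
  · exact coeff_modMonomial_of_le p (by simpa [Finsupp.single_le_iff, Nat.one_le_iff_ne_zero])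

noncomputable def divX : MvPolynomial σ R →ₗ[R] MvPolynomial σ R where
  toFun p := p.divMonomial (Finsupp.single x 1)
  map_add' p q := add_divMonomial p q _
  map_smul' c p := by ext; simp [coeff_divMonomial]

noncomputable def modX : MvPolynomial σ R →ₗ[R] MvPolynomial σ R where
  toFun p := p.modMonomial (Finsupp.single x 1)
  map_add' p q := by ext a; simp only [coeff_modMonomial_single, coeff_add]; split_ifs <;> simp
  map_smul' c p := by ext a; simp only [coeff_modMonomial_single, coeff_smul]; split_ifs <;> simp

variable {x}

lemma coeff_divX (p : MvPolynomial σ R) (a : σ →₀ ℕ) :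
    coeff a (divX x p) = coeff (Finsupp.single x 1 + a) p :=
  coeff_divMonomial _ _ _

lemma coeff_modX (p : MvPolynomial σ R) (a : σ →₀ ℕ) :
    coeff a (modX x p) = if a x = 0 then coeff a p else 0 :=
  coeff_modMonomial_single x p a

lemma modX_add_X_mul_divX (p : MvPolynomial σ R) : modX x p + X x * divX x p = p :=
  modMonomial_add_divMonomial_single p x

lemma apply_eq_zero_of_mem_support_modX {p : MvPolynomial σ R} {a : σ →₀ ℕ}
    (ha : a ∈ (modX x p).support) : a x = 0 := by
  contrapose! ha
  simp [coeff_modX, ha]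

lemma divX_eq_and_modX_eq {p q r : MvPolynomial σ R} (h : p = X x * q + r)
    (hr : ∀ a ∈ r.support, a x = 0) : divX x p = q ∧ modX x p = r :=
  ⟨(eq_divMonomial_single h hr).symm, (eq_modMonomial_single h hr).symm⟩

lemma modX_modX (p : MvPolynomial σ R) : modX x (modX x p) = modX x p :=
  (divX_eq_and_modX_eq (q := 0) (by simp) fun _ => apply_eq_zero_of_mem_support_modX).2

@[simp] lemma modX_X_mul (p : MvPolynomial σ R) : modX x (X x * p) = 0 :=
  X_mul_modMonomial x p

@[simp] lemma divX_X_mul (p : MvPolynomial σ R) : divX x (X x * p) = p :=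
  X_mul_divMonomial x p

lemma X_mul_divX_of_modX_eq_zero {p : MvPolynomial σ R} (h : modX x p = 0) :
    X x * divX x p = p := by
  simpa [h] using modX_add_X_mul_divX (x := x) p

lemma divX_modX_X_mul_of_ne {k : σ} (hk : k ≠ x) (p : MvPolynomial σ R) :
    divX x (X k * p) = X k * divX x p ∧ modX x (X k * p) = X k * modX x p := by
  classical
  refine divX_eq_and_modX_eq ?_ ?_
  · conv_lhs => rw [← modX_add_X_mul_divX (x := x) p]
    ring
  · intro a ha
    simp only [support_X_mul, Finset.mem_map, addLeftEmbedding_apply] at ha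
    obtain ⟨b, hb, rfl⟩ := ha
    simp [hk, apply_eq_zero_of_mem_support_modX hb]

lemma IsHomogeneous.modX {p : MvPolynomial σ R} {m : ℕ} (hp : p.IsHomogeneous m) :
    (modX x p).IsHomogeneous m := by
  intro a ha
  rw [coeff_modX] at ha
  split_ifs at ha
  · exact hp ha
  · exact absurd rfl ha

lemma IsHomogeneous.divX {p : MvPolynomial σ R} {m : ℕ} (hp : p.IsHomogeneous m) :
    (divX x p).IsHomogeneous (m - 1) := by
  intro a ha
  have := hp (by rwa [coeff_divX] at ha)
  simp only [map_add, Finsupp.weight_single, Pi.one_apply, smul_eq_mul, mul_one] at this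
  omega

lemma IsHomogeneous.eq_zero_of_mem_span_monomial {σ R : Type*} [CommSemiring R]
    {A : Set (σ →₀ ℕ)} {d : ℕ} (hA : ∀ a ∈ A, a.degree = d) {p : MvPolynomial σ R} {m : ℕ}
    (hp : p.IsHomogeneous m) (hmd : m < d)
    (hpA : p ∈ Ideal.span ((fun a => monomial a (1 : R)) '' A)) : p = 0 := by
  ext b
  by_contra hb
  obtain ⟨a, ha, hab⟩ := mem_ideal_span_monomial_image.1 hpA b (mem_support_iff.2 hb)
  have hbm : b.degree = m := by rw [Finsupp.degree_eq_weight_one]; exact hp hb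
  have := Finsupp.degree_mono hab
  rw [hA a ha] at this
  omega

end MvPolynomial

open Finset in
def koszulSign {n : ℕ} (k : Fin n) (T : Finset (Fin n)) : ℤ :=
  (-1) ^ #((insert k T).filter (· < k))

section KoszulSign

variable {n : ℕ}

lemma koszulSign_mul_self (k : Fin n) (T : Finset (Fin n)) :
    koszulSign k T * koszulSign k T = 1 := by
  rw [koszulSign, ← mul_pow]
  norm_num

lemma koszulSign_insert {x k : Fin n} {U : Finset (Fin n)} (hxk : x ≠ k) (hx : x ∉ U) :
    koszulSign k (insert x U) = (if x < k then -1 else 1) * koszulSign k U := by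
  have hx' : x ∉ insert k U := by simp [hxk, hx]
  rw [koszulSign, koszulSign, Finset.insert_comm, Finset.filter_insert]
  split_ifs <;> simp [Finset.card_insert_of_notMem (fun h => hx' (Finset.mem_of_mem_filter x h)),
    pow_succ]

lemma koszulSign_swap {x k : Fin n} {U : Finset (Fin n)} (hxk : x ≠ k) (hx : x ∉ U)
    (hk : k ∉ U) :
    koszulSign k (insert x U) * koszulSign x (insert k U) =
      -(koszulSign x U * koszulSign k U) := by
  rw [koszulSign_insert hxk hx, koszulSign_insert hxk.symm hk]
  rcases hxk.lt_or_gt with h | h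
  · simp [h, h.not_gt]; ring
  · simp [h, h.not_gt]; ring

end KoszulSign

abbrev KoszulChain (K : Type) [Field K] (n : ℕ) : Type := Finset (Fin n) → PolyR K n

section KoszulChains

variable {K : Type} [Field K] {n : ℕ}

lemma kDiff_apply (f : KoszulChain K n) (T : Finset (Fin n)) :
    kDiff K n f T = ∑ k ∈ Tᶜ, koszulSign k T • (X k * f (insert k T)) := rfl

noncomputable def chainModX (x : Fin n) : KoszulChain K n →ₗ[K] KoszulChain K n where
  toFun f S := if x ∈ S then 0 else modX x (f S)
  map_add' f g := by funext S; by_cases h : x ∈ S <;> simp [h]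
  map_smul' c f := by funext S; by_cases h : x ∈ S <;> simp [h]

noncomputable def chainDivX (x : Fin n) : KoszulChain K n →ₗ[K] KoszulChain K n where
  toFun f S := if x ∈ S then koszulSign x (S.erase x) • divX x (f (S.erase x)) else 0
  map_add' f g := by funext S; by_cases h : x ∈ S <;> simp [h]
  map_smul' c f := by funext S; by_cases h : x ∈ S <;> simp [h]

lemma chainModX_apply (x : Fin n) (f : KoszulChain K n) (S : Finset (Fin n)) :
    chainModX x f S = if x ∈ S then 0 else modX x (f S) := rfl

lemma chainDivX_apply (x : Fin n) (f : KoszulChain K n) (S : Finset (Fin n)) :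
    chainDivX x f S = if x ∈ S then koszulSign x (S.erase x) • divX x (f (S.erase x)) else 0 :=
  rfl

lemma chainModX_chainModX (x : Fin n) (f : KoszulChain K n) :
    chainModX x (chainModX x f) = chainModX x f := by
  funext S
  simp only [chainModX_apply]
  split_ifs <;> simp [modX_modX]

lemma kDiff_chainModX (x : Fin n) (f : KoszulChain K n) :
    kDiff K n (chainModX x f) = chainModX x (kDiff K n f) := by
  funext T
  rw [chainModX_apply, kDiff_apply]
  split_ifs with hx
  · refine Finset.sum_eq_zero fun k _ => ?_
    simp [chainModX_apply, hx]
  · rw [kDiff_apply, map_sum]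
    refine Finset.sum_congr rfl fun k _ => ?_
    rw [map_zsmul, chainModX_apply]
    by_cases hkx : k = x
    · subst hkx
      simp
    · simp [hx, Ne.symm hkx, (divX_modX_X_mul_of_ne hkx _).2]

lemma kDiff_chainDivX_add_chainDivX_kDiff (x : Fin n) {f : KoszulChain K n}
    (hf : chainModX x f = 0) : kDiff K n (chainDivX x f) + chainDivX x (kDiff K n f) = f := by
  funext T
  rw [Pi.add_apply]
  by_cases hx : x ∈ T
  · obtain ⟨U, hxU, rfl⟩ : ∃ U, x ∉ U ∧ T = insert x U :=
      ⟨T.erase x, Finset.notMem_erase x T, (Finset.insert_erase hx).symm⟩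
    have hcompl : Uᶜ = insert x (insert x U)ᶜ := by
      ext a; by_cases ha : a = x <;> simp [ha, hxU]
    rw [chainDivX_apply, if_pos hx, Finset.erase_insert hxU, kDiff_apply f U, hcompl,
      Finset.sum_insert (by simp), map_add, map_sum, map_zsmul, divX_X_mul, smul_add, smul_smul,
      koszulSign_mul_self, one_smul, kDiff_apply, add_comm, add_assoc, add_eq_left,
      Finset.smul_sum, ← Finset.sum_add_distrib]
    refine Finset.sum_eq_zero fun k hk => ?_
    have hkx : x ≠ k := by rintro rfl; simp at hk
    have hkU : k ∉ U := by simp_all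
    rw [chainDivX_apply, if_pos (by simp), Finset.insert_comm,
      Finset.erase_insert (by simp [hkx, hxU]), map_zsmul,
      (divX_modX_X_mul_of_ne hkx.symm _).1, mul_smul_comm, smul_smul, smul_smul, ← add_smul,
      koszulSign_swap hkx hxU hkU, add_neg_cancel, zero_smul]
  · have hfT : modX x (f T) = 0 := by simpa [chainModX_apply, hx] using congrFun hf T
    rw [chainDivX_apply x (kDiff K n f), if_neg hx, add_zero, kDiff_apply,
      Finset.sum_eq_single_of_mem x (by simpa using hx)]
    · rw [chainDivX_apply, if_pos (Finset.mem_insert_self x T), Finset.erase_insert hx,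
        mul_smul_comm, smul_smul, koszulSign_mul_self, one_smul, X_mul_divX_of_modX_eq_zero hfT]
    · intro k _ hkx
      rw [chainDivX_apply, if_neg (by simp [Ne.symm hkx, hx]), mul_zero, smul_zero]

end KoszulChains

section KoszulComplex

variable {K : Type} [Field K] {n : ℕ}

lemma mem_kosC {I : Ideal (PolyR K n)} {i j : ℕ} (hij : i ≤ j) (f : KoszulChain K n) :
    f ∈ kosC K n I i j ↔ ∀ S : Finset (Fin n),
      (S.card = i → f S ∈ I ∧ (f S).IsHomogeneous (j - i)) ∧ (S.card ≠ i → f S = 0) := by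
  simp only [kosC, if_pos hij, Submodule.mem_iInf, Submodule.mem_comap, LinearMap.proj_apply]
  refine forall_congr' fun S => ?_
  by_cases h : S.card = i <;> simp [h, mem_homogeneousSubmodule]

lemma kosC_of_not_le (I : Ideal (PolyR K n)) {i j : ℕ} (h : ¬ i ≤ j) : kosC K n I i j = ⊥ :=
  if_neg h

instance (I : Ideal (PolyR K n)) (i j : ℕ) : FiniteDimensional K (kosC K n I i j) := by
  by_cases hij : i ≤ j
  · let V := homogeneousSubmodule (Fin n) K (j - i)
    have : FiniteDimensional K V := Submodule.finiteDimensional_of_le fun p hp =>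
      (mem_restrictTotalDegree ..).2 ((mem_homogeneousSubmodule ..).1 hp).totalDegree_le
    let Φ : (Finset (Fin n) → V) →ₗ[K] KoszulChain K n :=
      LinearMap.pi fun S => V.subtype ∘ₗ LinearMap.proj S
    refine Submodule.finiteDimensional_of_le (S₂ := LinearMap.range Φ) fun f hf => ?_
    rw [mem_kosC hij] at hf
    refine ⟨fun S => ⟨f S, ?_⟩, rfl⟩
    by_cases h : S.card = i
    · exact (mem_homogeneousSubmodule ..).2 ((hf S).1 h).2
    · simp [(hf S).2 h]
  · rw [kosC_of_not_le I hij]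
    infer_instance

lemma bettiNum_eq_zero_iff (I : Ideal (PolyR K n)) (i j : ℕ) :
    bettiNum K n I i j = 0 ↔
      kosC K n I i j ⊓ LinearMap.ker (kDiff K n) ≤
        (kosC K n I (i + 1) j).map (kDiff K n) := by
  rw [bettiNum, Nat.sub_eq_zero_iff_le]
  constructor
  · intro h
    exact (Submodule.eq_of_le_of_finrank_le inf_le_right h).symm ▸ inf_le_left
  · intro h
    rw [inf_eq_right.2 h]

lemma chainModX_mem_kosC {I J : Ideal (PolyR K n)} {x : Fin n} (hIJ : ∀ p ∈ I, modX x p ∈ J)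
    {i j : ℕ} {f : KoszulChain K n} (hf : f ∈ kosC K n I i j) :
    chainModX x f ∈ kosC K n J i j := by
  by_cases hij : i ≤ j
  · rw [mem_kosC hij] at hf ⊢
    intro S
    by_cases hxS : x ∈ S
    · simp [chainModX_apply, hxS, isHomogeneous_zero]
    · simp only [chainModX_apply, if_neg hxS]
      exact ⟨fun h => ⟨hIJ _ ((hf S).1 h).1, ((hf S).1 h).2.modX⟩,
        fun h => by rw [(hf S).2 h, map_zero]⟩
  · rw [kosC_of_not_le I hij] at hf
    rw [(Submodule.mem_bot K).1 hf, map_zero]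
    exact zero_mem _

lemma chainDivX_mem_kosC {J : Ideal (PolyR K n)} {x : Fin n} (hJ : ∀ p ∈ J, divX x p ∈ J)
    {i j : ℕ} (hij : i < j) {f : KoszulChain K n} (hf : f ∈ kosC K n J i j) :
    chainDivX x f ∈ kosC K n J (i + 1) j := by
  rw [mem_kosC hij.le] at hf
  rw [mem_kosC hij]
  intro S
  by_cases hxS : x ∈ S
  · have hcard : (S.erase x).card = S.card - 1 := Finset.card_erase_of_mem hxS
    have hpos : 0 < S.card := Finset.card_pos.2 ⟨x, hxS⟩
    simp only [chainDivX_apply, if_pos hxS]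
    refine ⟨fun h => ?_, fun h => ?_⟩
    · obtain ⟨hmem, hhom⟩ := (hf (S.erase x)).1 (by omega)
      refine ⟨zsmul_mem (hJ _ hmem) _, ?_⟩
      rw [show j - (i + 1) = j - i - 1 by omega]
      exact (mem_homogeneousSubmodule ..).1
        (zsmul_mem ((mem_homogeneousSubmodule ..).2 hhom.divX) _)
    · rw [(hf (S.erase x)).2 (by omega), map_zero, smul_zero]
  · simp [chainDivX_apply, hxS, isHomogeneous_zero]

lemma bettiNum_eq_zero_of_modX_divX {I J : Ideal (PolyR K n)} {x : Fin n} (hJI : J ≤ I)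
    (hmod : ∀ p ∈ I, modX x p ∈ J) (hdiv : ∀ p ∈ J, divX x p ∈ J) {i j : ℕ} (hij : i < j)
    (h : bettiNum K n I i j = 0) : bettiNum K n J i j = 0 := by
  rw [bettiNum_eq_zero_iff] at h ⊢
  intro f hf
  obtain ⟨hfJ, hfker⟩ := Submodule.mem_inf.1 hf
  rw [LinearMap.mem_ker] at hfker
  have hf₀J : chainModX x f ∈ kosC K n J i j :=
    chainModX_mem_kosC (fun p hp => hmod p (hJI hp)) hfJ
  obtain ⟨g, hgI, hg⟩ : chainModX x f ∈ (kosC K n I (i + 1) j).map (kDiff K n) :=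
    h (Submodule.mem_inf.2 ⟨chainModX_mem_kosC (fun p hp => hJI (hmod p (hJI hp))) hfJ,
      by rw [LinearMap.mem_ker, kDiff_chainModX, hfker, map_zero]⟩)
  set f₁ := f - chainModX x f with hf₁
  have hf₁mod : chainModX x f₁ = 0 := by rw [hf₁, map_sub, chainModX_chainModX, sub_self]
  have hf₁ker : kDiff K n f₁ = 0 := by
    rw [hf₁, map_sub, kDiff_chainModX, hfker, map_zero, sub_zero]
  have hhtpy := kDiff_chainDivX_add_chainDivX_kDiff x hf₁mod
  rw [hf₁ker, map_zero, add_zero] at hhtpy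
  refine ⟨chainModX x g + chainDivX x f₁,
    add_mem (chainModX_mem_kosC hmod hgI) (chainDivX_mem_kosC hdiv hij (sub_mem hfJ hf₀J)), ?_⟩
  rw [map_add, kDiff_chainModX, hg, chainModX_chainModX, hhtpy, hf₁, add_sub_cancel]

lemma bettiNum_zero_ne_zero {J : Ideal (PolyR K n)} {d : ℕ}
    (hlow : ∀ p ∈ J, ∀ m < d, p.IsHomogeneous m → p = 0) {p : PolyR K n} (hpJ : p ∈ J)
    (hp : p.IsHomogeneous d) (hp0 : p ≠ 0) : bettiNum K n J 0 d ≠ 0 := by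
  have hbot : kosC K n J 1 d = ⊥ := by
    by_cases h1 : 1 ≤ d
    · refine eq_bot_iff.2 fun f hf => (Submodule.mem_bot K).2 (funext fun S => ?_)
      rw [mem_kosC h1] at hf
      by_cases hS : S.card = 1
      · exact hlow _ ((hf S).1 hS).1 (d - 1) (by omega) ((hf S).1 hS).2
      · exact (hf S).2 hS
    · exact kosC_of_not_le J h1
  have hcycles : kosC K n J 0 d ≤ LinearMap.ker (kDiff K n) := by
    intro f hf
    rw [mem_kosC (Nat.zero_le d)] at hf
    refine LinearMap.mem_ker.2 (funext fun T => Finset.sum_eq_zero fun k _ => ?_)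
    rw [(hf _).2 (Finset.card_ne_zero_of_mem (Finset.mem_insert_self k T)), mul_zero, smul_zero]
  have hmem : Pi.single ∅ p ∈ kosC K n J 0 d := by
    rw [mem_kosC (Nat.zero_le d)]
    intro S
    by_cases hS : S = ∅
    · subst hS
      simp [hpJ, hp]
    · simp [hS]
  rw [bettiNum, zero_add, hbot, Submodule.map_bot, bot_inf_eq, finrank_bot, Nat.sub_zero,
    inf_eq_left.2 hcycles, Ne, Submodule.finrank_eq_zero]
  intro hzero
  rw [hzero, Submodule.mem_bot] at hmem
  exact hp0 (by simpa using congrFun hmem ∅)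

lemma sub_le_CMreg {J : Ideal (PolyR K n)} (hJ : CMreg K n J ≠ 0) {i j : ℕ}
    (h : bettiNum K n J i j ≠ 0) : j - i ≤ CMreg K n J := by
  refine le_csSup (by_contra fun hbdd => hJ ?_) ⟨i, j, h, rfl⟩
  rw [CMreg, csSup_of_not_bddAbove hbdd, csSup_empty, Nat.bot_eq_zero]

lemma CMreg_eq {J : Ideal (PolyR K n)} {d : ℕ}
    (hle : ∀ i j, bettiNum K n J i j ≠ 0 → j - i ≤ d) (h : bettiNum K n J 0 d ≠ 0) :
    CMreg K n J = d :=
  IsGreatest.csSup_eq ⟨⟨0, d, h, rfl⟩, by rintro _ ⟨i, j, hb, rfl⟩; exact hle i j hb⟩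

end KoszulComplex

section Deletion

variable {K : Type} [Field K] {n : ℕ}

lemma exists_mem_minMonomialGens_le {I : Ideal (PolyR K n)} {m : Fin n →₀ ℕ}
    (hm : monomial m (1 : K) ∈ I) : ∃ c ∈ minMonomialGens K n I, c ≤ m := by
  obtain ⟨c, ⟨hcm, hcI⟩, hmin⟩ :=
    wellFounded_lt.has_min {b | b ≤ m ∧ monomial b (1 : K) ∈ I} ⟨m, le_rfl, hm⟩
  exact ⟨c, ⟨hcI, fun b hbc hne hbI => hmin b ⟨hbc.trans hcm, hbI⟩ (lt_of_le_of_ne hbc hne)⟩, hcm⟩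

lemma IsMonomialIdeal.monomial_mem {I : Ideal (PolyR K n)} (hI : IsMonomialIdeal K n I)
    {p : PolyR K n} (hp : p ∈ I) {m : Fin n →₀ ℕ} (hm : m ∈ p.support) :
    monomial m (1 : K) ∈ I := by
  obtain ⟨A, rfl⟩ := hI
  obtain ⟨a, ha, ham⟩ := mem_ideal_span_monomial_image.1 hp m hm
  have hfactor : monomial m (1 : K) = monomial a 1 * monomial (m - a) 1 := by
    rw [monomial_mul, one_mul, add_tsub_cancel_of_le ham]
  rw [hfactor]
  exact Ideal.mul_mem_right _ _ (Ideal.subset_span ⟨a, ha, rfl⟩)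

noncomputable def deletion (I : Ideal (PolyR K n)) (x : Fin n) : Ideal (PolyR K n) :=
  Ideal.span ((fun a => (monomial a (1 : K) : PolyR K n)) ''
    {a ∈ minMonomialGens K n I | a x = 0})

lemma deletion_le (I : Ideal (PolyR K n)) (x : Fin n) : deletion I x ≤ I :=
  Ideal.span_le.2 (by rintro _ ⟨a, ⟨ha, -⟩, rfl⟩; exact ha.1)

lemma modX_mem_deletion {I : Ideal (PolyR K n)} (hI : IsMonomialIdeal K n I) {x : Fin n}
    {p : PolyR K n} (hp : p ∈ I) : modX x p ∈ deletion I x := by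
  refine mem_ideal_span_monomial_image.2 fun m hm => ?_
  have hmx := apply_eq_zero_of_mem_support_modX hm
  have hmp : m ∈ p.support := by simpa [coeff_modX, hmx] using hm
  obtain ⟨c, hc, hcm⟩ := exists_mem_minMonomialGens_le (hI.monomial_mem hp hmp)
  exact ⟨c, ⟨hc, Nat.eq_zero_of_le_zero (hmx ▸ hcm x)⟩, hcm⟩

lemma divX_mem_deletion {I : Ideal (PolyR K n)} {x : Fin n} {p : PolyR K n}
    (hp : p ∈ deletion I x) : divX x p ∈ deletion I x := by
  refine mem_ideal_span_monomial_image.2 fun m hm => ?_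
  rw [MvPolynomial.mem_support_iff, coeff_divX] at hm
  obtain ⟨c, ⟨hc, hcx⟩, hcm⟩ :=
    mem_ideal_span_monomial_image.1 hp _ (MvPolynomial.mem_support_iff.2 hm)
  refine ⟨c, ⟨hc, hcx⟩, fun i => ?_⟩
  by_cases hi : i = x
  · simp [hi, hcx]
  · simpa [Finsupp.single_apply, Ne.symm hi] using hcm i

end Deletion

theorem stmt0_general {K : Type} [Field K] {n : ℕ} (I : Ideal (PolyR K n)) (d : ℕ)
    (hmono : IsMonomialIdeal K n I)
    (hdeg : ∀ a ∈ minMonomialGens K n I, (a.sum fun _ e => e) = d)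
    (hlin : CMreg K n I = d) (x : Fin n) :
    Ideal.span ((fun a => (monomial a (1 : K) : PolyR K n)) ''
        {a ∈ minMonomialGens K n I | a x = 0}) = ⊥ ∨
      CMreg K n (Ideal.span ((fun a => (monomial a (1 : K) : PolyR K n)) ''
        {a ∈ minMonomialGens K n I | a x = 0})) = d := by
  rcases Set.eq_empty_or_nonempty {a ∈ minMonomialGens K n I | a x = 0} with hE | ⟨a₀, ha₀⟩
  · left
    rw [hE, Set.image_empty, Ideal.span_empty]
  right
  change CMreg K n (deletion I x) = d
  have ha₀d : a₀.degree = d := hdeg a₀ ha₀.1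
  rcases Nat.eq_zero_or_pos d with rfl | hd
  · obtain rfl : a₀ = 0 := (Finsupp.degree_eq_zero_iff a₀).1 ha₀d
    have hI : I = ⊤ := Ideal.eq_top_of_isUnit_mem _ ha₀.1.1 (by simp)
    have hI' : deletion I x = ⊤ :=
      Ideal.eq_top_of_isUnit_mem _ (Ideal.subset_span ⟨0, ha₀, rfl⟩) (by simp)
    rwa [hI', ← hI]
  have hle (i j : ℕ) (hb : bettiNum K n (deletion I x) i j ≠ 0) : j - i ≤ d := by
    by_contra! hlt
    refine hb (bettiNum_eq_zero_of_modX_divX (deletion_le I x)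
      (fun _ => modX_mem_deletion hmono) (fun _ => divX_mem_deletion) (by omega) ?_)
    by_contra hne
    have := sub_le_CMreg (hlin ▸ hd.ne') hne
    omega
  have hlow : ∀ p ∈ deletion I x, ∀ m < d, p.IsHomogeneous m → p = 0 :=
    fun p hp m hm hhom => hhom.eq_zero_of_mem_span_monomial (fun a ha => hdeg a ha.1) hm hp
  exact CMreg_eq hle (bettiNum_zero_ne_zero hlow (Ideal.subset_span ⟨a₀, ha₀, rfl⟩)
    (isHomogeneous_monomial _ ha₀d) (by simp))

/-- If a monomial ideal `I` is generated in a single degree `d` and has a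
`d`-linear resolution, then the ideal `I'` generated by the minimal generators of `I` not
divisible by the variable `x` is zero or again has a `d`-linear resolution. -/
theorem stmt0 {K : Type} [Field K] {n : ℕ} (I : Ideal (PolyR K n)) (d : ℕ)
    (hmono : IsMonomialIdeal K n I) (hne : I ≠ ⊥)
    (hdeg : ∀ a ∈ minMonomialGens K n I, (a.sum fun _ e => e) = d)
    (hlin : CMreg K n I = d) (x : Fin n) :
    Ideal.span ((fun a => (monomial a (1 : K) : PolyR K n)) ''
        {a ∈ minMonomialGens K n I | a x = 0}) = ⊥ ∨
      CMreg K n (Ideal.span ((fun a => (monomial a (1 : K) : PolyR K n)) ''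
        {a ∈ minMonomialGens K n I | a x = 0})) = d :=
  stmt0_general I d hmono hdeg hlin x
end

section
/- Let I ⊆ R = K[x_1,...,x_n] be a monomial ideal of the form I = (I', x_{i_1}, ..., x_{i_r}), where I' is a vertex splittable monomial ideal and none of the variables x_{i_1}, ..., x_{i_r} appears in any minimal generator of I'. Then I is vertex splittable. -/
open MvPolynomial Module

/-! Adjoining a variable `x` that occurs in no minimal generator of a proper monomial ideal `I`
is itself a vertex splitting, with `I₁ = R` and `I₂ = I`: the minimal generators of `I + (x)`
are those of `I` together with `x`. Adjoining the variables one at a time preserves the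
hypotheses, since the new generator `x` avoids the variables still to be added. -/

section

variable {σ R : Type*} [CommSemiring R]

theorem monomial_mem_span_monomial_image_iff [Nontrivial R] {A : Set (σ →₀ ℕ)} {a : σ →₀ ℕ} :
    monomial a (1 : R) ∈ Ideal.span ((fun b => monomial b (1 : R)) '' A) ↔ ∃ b ∈ A, b ≤ a := by
  classical
  simp [mem_ideal_span_monomial_image, support_monomial]

theorem span_monomial_image_sup_span_X (A : Set (σ →₀ ℕ)) (x : σ) :
    Ideal.span ((fun b => monomial b (1 : R)) '' A) ⊔ Ideal.span {X x} =
      Ideal.span ((fun b => monomial b (1 : R)) '' insert (Finsupp.single x 1) A) := by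
  rw [Set.image_insert_eq, Ideal.span_insert, sup_comm]
  rfl

theorem Finsupp.eq_zero_of_lt_single_one {x : σ} {b : σ →₀ ℕ}
    (h : b < Finsupp.single x 1) : b = 0 := by
  have hb : b = Finsupp.single x (b x) :=
    Finsupp.eq_single_iff.2 ⟨(Finsupp.support_mono h.le).trans Finsupp.support_single_subset, rfl⟩
  have hle : b x ≤ 1 := by simpa using h.le x
  have hne : b x ≠ 1 := fun h1 => h.ne (hb.trans (by rw [h1]))
  rw [hb, Finsupp.single_eq_zero]
  omega

end

variable {K : Type} [Field K] {n : ℕ}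

theorem minMonomialGens_top : minMonomialGens K n ⊤ = {0} := by
  ext a
  refine ⟨fun ha => ?_, fun ha => ⟨Submodule.mem_top, fun b hb hne _ => hne ?_⟩⟩
  · by_contra hne
    exact ha.2 0 zero_le (Ne.symm hne) Submodule.mem_top
  · rw [Set.mem_singleton_iff.1 ha] at hb ⊢
    exact le_antisymm hb zero_le

theorem mem_minMonomialGens_of_le {I J : Ideal (PolyR K n)} (hIJ : I ≤ J) {a : Fin n →₀ ℕ}
    (haI : monomial a (1 : K) ∈ I) (haJ : a ∈ minMonomialGens K n J) :
    a ∈ minMonomialGens K n I :=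
  ⟨haI, fun b hb hne hbI => haJ.2 b hb hne (hIJ hbI)⟩

namespace IsMonomialIdeal

variable {I : Ideal (PolyR K n)}

theorem sup_span_X (hI : IsMonomialIdeal K n I) (x : Fin n) :
    IsMonomialIdeal K n (I ⊔ Ideal.span {X x}) := by
  obtain ⟨A, rfl⟩ := hI
  exact ⟨_, span_monomial_image_sup_span_X A x⟩

theorem monomial_mem_sup_span_X_iff (hI : IsMonomialIdeal K n I) (x : Fin n)
    (a : Fin n →₀ ℕ) :
    monomial a (1 : K) ∈ I ⊔ Ideal.span {X x} ↔ monomial a (1 : K) ∈ I ∨ 1 ≤ a x := by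
  obtain ⟨A, rfl⟩ := hI
  simp only [span_monomial_image_sup_span_X, monomial_mem_span_monomial_image_iff,
    Set.exists_mem_insert, Finsupp.single_le_iff]
  exact or_comm

end IsMonomialIdeal

theorem minMonomialGens_sup_span_X_subset {I : Ideal (PolyR K n)} (hI : IsMonomialIdeal K n I)
    (x : Fin n) :
    minMonomialGens K n (I ⊔ Ideal.span {X x}) ⊆
      insert (Finsupp.single x 1) (minMonomialGens K n I) := by
  intro a ha
  rcases (hI.monomial_mem_sup_span_X_iff x a).1 ha.1 with haI | hax
  · exact Or.inr (mem_minMonomialGens_of_le le_sup_left haI ha)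
  · by_contra hne
    exact ha.2 _ (Finsupp.single_le_iff.2 hax) (fun h => hne (Or.inl h.symm))
      (Ideal.mem_sup_right (Ideal.subset_span rfl))

theorem minMonomialGens_sup_span_X {I : Ideal (PolyR K n)} (hI : IsMonomialIdeal K n I)
    (hItop : I ≠ ⊤) {x : Fin n} (hx : ∀ a ∈ minMonomialGens K n I, a x = 0) :
    minMonomialGens K n (I ⊔ Ideal.span {X x}) =
      insert (Finsupp.single x 1) (minMonomialGens K n I) := by
  refine (minMonomialGens_sup_span_X_subset hI x).antisymm ?_
  rintro a (rfl | ha)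
  · refine ⟨Ideal.mem_sup_right (Ideal.subset_span rfl), fun b hb hne hbJ => hItop ?_⟩
    rw [Finsupp.eq_zero_of_lt_single_one (hb.lt_of_ne hne), hI.monomial_mem_sup_span_X_iff]
      at hbJ
    simpa [Ideal.eq_top_iff_one] using hbJ
  · refine ⟨Ideal.mem_sup_left ha.1, fun b hb hne hbJ => ?_⟩
    rcases (hI.monomial_mem_sup_span_X_iff x b).1 hbJ with hbI | hbx
    · exact ha.2 b hb hne hbI
    · have hba : b x ≤ a x := hb x
      have hax : a x = 0 := hx a ha
      omega

namespace VertexSplittable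

theorem sup_span_X {I : Ideal (PolyR K n)} (hvs : VertexSplittable K n I)
    (hI : IsMonomialIdeal K n I) {x : Fin n} (hx : ∀ a ∈ minMonomialGens K n I, a x = 0) :
    VertexSplittable K n (I ⊔ Ideal.span {X x}) := by
  rcases eq_or_ne I ⊤ with rfl | hItop
  · rw [top_sup_eq]
    exact .top
  have hgens := minMonomialGens_sup_span_X hI hItop hx
  have hsplit : I ⊔ Ideal.span {X x} = Ideal.span {X x} * ⊤ + I := by
    rw [Ideal.mul_top, Submodule.add_eq_sup, sup_comm]
  rw [hsplit] at hgens ⊢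
  refine .split x ⊤ I .top hvs (by simp [minMonomialGens_top]) hx le_top ?_ ?_
  · rw [hgens, minMonomialGens_top, Set.image_singleton, zero_add, Set.insert_eq]
  · rw [minMonomialGens_top, Set.image_singleton, zero_add, Set.disjoint_singleton_left]
    intro h
    simpa using hx _ h

theorem sup_span_X_image (S : Finset (Fin n)) {I : Ideal (PolyR K n)}
    (hvs : VertexSplittable K n I) (hI : IsMonomialIdeal K n I)
    (hS : ∀ a ∈ minMonomialGens K n I, ∀ x ∈ S, a x = 0) :
    VertexSplittable K n (I ⊔ Ideal.span (X '' (S : Set (Fin n)))) := by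
  induction S using Finset.induction_on generalizing I with
  | empty => simpa using hvs
  | @insert x S hxS ih =>
    rw [Finset.coe_insert, Set.image_insert_eq, Ideal.span_insert, ← sup_assoc]
    refine ih (hvs.sup_span_X hI fun a ha => hS a ha x (Finset.mem_insert_self x S))
      (hI.sup_span_X x) fun a ha y hy => ?_
    rcases minMonomialGens_sup_span_X_subset hI x ha with rfl | ha
    · exact Finsupp.single_eq_of_ne (ne_of_mem_of_not_mem hy hxS)
    · exact hS a ha y (Finset.mem_insert_of_mem hy)

end VertexSplittable

/-- If `I = (I', x_{i₁}, ..., x_{i_r})` where `I'` is a vertex splittable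
monomial ideal in which none of the variables `x_{i₁}, ..., x_{i_r}` appears in a minimal
generator, then `I` is vertex splittable. -/
theorem stmt11 {K : Type} [Field K] {n : ℕ} (I' : Ideal (PolyR K n))
    (hmono : IsMonomialIdeal K n I')
    (hvs : VertexSplittable K n I') (r : ℕ) (xs : Fin r → Fin n)
    (havoid : ∀ a ∈ minMonomialGens K n I', ∀ j : Fin r, a (xs j) = 0) :
    VertexSplittable K n (I' + Ideal.span (Set.range fun j => (X (xs j) : PolyR K n))) := by
  have hvars : Set.range (fun j => (X (xs j) : PolyR K n)) =
      X '' ((Finset.univ.image xs : Finset (Fin n)) : Set (Fin n)) := by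
    rw [Finset.coe_image, Finset.coe_univ, Set.image_univ, ← Set.range_comp]
    rfl
  rw [hvars, Submodule.add_eq_sup]
  exact hvs.sup_span_X_image _ hmono (by simpa using havoid)
end

section
/- Let G be a simple graph with at least one edge such that the complement G^c is chordal. Then there exist two adjacent vertices x and y of G such that both neighborhoods N_G(x) and N_G(y) are minimal vertex covers of G. -/
open MvPolynomial Module

/-!
Write `H = Gᶜ`. If the `H`-neighbours of a vertex `x` form an `H`-clique (`x` is simplicial in
`H`), then `x` together with its `H`-neighbours is independent in `G`, so `N_G(x)` is a vertex
cover, and it is minimal because each `v ∈ N_G(x)` is needed to cover the edge `xv`. It therefore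
suffices to find two simplicial vertices of `H` that are not adjacent in `H`; `H` is chordal and
not complete, so this is Dirac's theorem.

Dirac's theorem goes by induction on the vertex set. For nonadjacent `a`, `b`, an
inclusion-minimal `a`–`b` separator `S` is a clique: two nonadjacent `s, t ∈ S` both have
neighbours in the component of `a` and in that of `b`, and shortest `s`–`t` paths through the two
components close up into an induced cycle of length at least four. The induction hypothesis for
the component of `a` together with `S` yields a vertex simplicial there that is not in the clique
`S`; since its neighbours all lie in the component or in `S`, it is simplicial in the whole graph.
The same on the side of `b` gives the second vertex.
-/

namespace SimpleGraph

section Restrict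

variable {V : Type*} {G H : SimpleGraph V} {U : Set V} {u v : V}

/-- Unlike `H.induce U`, this keeps the vertex type `V`, so that reachability inside different
vertex sets can be compared. -/
def restrict (H : SimpleGraph V) (U : Set V) : SimpleGraph V where
  Adj x y := H.Adj x y ∧ x ∈ U ∧ y ∈ U
  symm := ⟨fun _ _ ⟨h, hx, hy⟩ => ⟨h.symm, hy, hx⟩⟩
  loopless := ⟨fun _ h => h.1.ne rfl⟩

lemma restrict_le : H.restrict U ≤ H := fun _ _ h => h.1

lemma restrict_mono {U' : Set V} (h : U ⊆ U') : H.restrict U ≤ H.restrict U' :=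
  fun _ _ hxy => ⟨hxy.1, h hxy.2.1, h hxy.2.2⟩

lemma Reachable.mem_of_adj_closed {C : Set V} (hC : ∀ ⦃x y⦄, x ∈ C → G.Adj x y → y ∈ C)
    (h : G.Reachable u v) (hu : u ∈ C) : v ∈ C := by
  rw [reachable_iff_reflTransGen] at h
  induction h with
  | refl => exact hu
  | tail _ hadj ih => exact hC ih hadj

lemma Reachable.mem_of_restrict (h : (H.restrict U).Reachable u v) (hu : u ∈ U) : v ∈ U :=
  h.mem_of_adj_closed (G := H.restrict U) (fun _ _ _ hxy => hxy.2.2) hu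

lemma Reachable.restrict_reachableSet {c : V} (hv : (H.restrict U).Reachable u v)
    (hu : (H.restrict U).Reachable c u) :
    (H.restrict {x | (H.restrict U).Reachable c x}).Reachable u v := by
  rw [reachable_iff_reflTransGen] at hv
  induction hv with
  | refl => rfl
  | @tail x y hux hxy ih =>
    have hcx : (H.restrict U).Reachable c x :=
      hu.trans ((reachable_iff_reflTransGen u x).mpr hux)
    exact ih.trans (Adj.reachable ⟨hxy.1, hcx, hcx.trans hxy.reachable⟩)

namespace Walk

def IsInducedPath (p : G.Walk u v) : Prop :=
  p.IsPath ∧ ∀ i j, i + 1 < j → j ≤ p.length → ¬G.Adj (p.getVert i) (p.getVert j)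

lemma isInducedPath_of_length_eq_dist (p : G.Walk u v) (hp : p.length = G.dist u v) :
    p.IsInducedPath := by
  refine ⟨p.isPath_of_length_eq_dist hp, fun i j hij hj hadj => ?_⟩
  have := G.dist_le ((p.take i).append (cons hadj (p.drop j)))
  simp only [length_append, take_length, length_cons, drop_length] at this
  omega

lemma two_le_length_of_not_adj (p : G.Walk u v) (huv : u ≠ v) (hnadj : ¬G.Adj u v) :
    2 ≤ p.length := by
  by_contra h
  interval_cases hl : p.length
  · exact huv (eq_of_length_eq_zero hl)
  · exact hnadj (adj_of_length_eq_one hl)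

lemma IsPath.getVert_mem_of_support_subset {p : G.Walk u v} (hp : p.IsPath) {A : Set V}
    (hA : ∀ x ∈ p.support, x ∈ insert u (insert v A)) {i : ℕ} (hi0 : 0 < i)
    (hi : i < p.length) : p.getVert i ∈ A := by
  rcases hA _ (p.getVert_mem_support i) with h | h | h
  · exact absurd ((hp.getVert_eq_start_iff hi.le).mp h) hi0.ne'
  · exact absurd ((hp.getVert_eq_end_iff hi.le).mp h) hi.ne
  · exact h

end Walk

lemma Reachable.exists_isInducedPath_restrict (h : (H.restrict U).Reachable u v) (hu : u ∈ U) :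
    ∃ p : H.Walk u v, p.IsInducedPath ∧ ∀ x ∈ p.support, x ∈ U := by
  classical
  obtain ⟨q, hq⟩ := h.exists_walk_length_eq_dist
  have hsupp : ∀ x ∈ q.support, x ∈ U := fun x hx =>
    (q.takeUntil x hx).reachable.mem_of_restrict hu
  obtain ⟨hpath, hshort⟩ := q.isInducedPath_of_length_eq_dist hq
  refine ⟨q.mapLe restrict_le, ⟨hpath.mapLe _, fun i j hij hj hadj => ?_⟩,
    by simpa using hsupp⟩
  simp only [Walk.getVert_map, Walk.length_map] at hadj hj
  exact hshort i j hij hj ⟨hadj, hsupp _ (q.getVert_mem_support i),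
    hsupp _ (q.getVert_mem_support j)⟩

end Restrict

namespace Walk

variable {V : Type*} {G : SimpleGraph V} {u v : V} {A B : Set V} {p q : G.Walk u v}

lemma getVert_append_reverse_of_le (p q : G.Walk u v) {m : ℕ} (hm : m ≤ p.length) :
    (p.append q.reverse).getVert m = p.getVert m := by
  simp [getVert_append', hm]

lemma getVert_append_reverse_of_length_le (p q : G.Walk u v) {m : ℕ} (hm : p.length ≤ m) :
    (p.append q.reverse).getVert m = q.getVert (p.length + q.length - m) := by
  rw [getVert_append', getVert_reverse]
  split_ifs with h
  · rw [show m = p.length by omega, show p.length + q.length - p.length = q.length by omega,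
      getVert_length, getVert_length]
  · congr 1; omega

lemma injOn_getVert_append_reverse (hAB : Disjoint A B) (hp : p.IsPath) (hq : q.IsPath)
    (hpA : ∀ x ∈ p.support, x ∈ insert u (insert v A))
    (hqB : ∀ x ∈ q.support, x ∈ insert u (insert v B)) :
    Set.InjOn (p.append q.reverse).getVert {i | i < (p.append q.reverse).length} := by
  suffices ∀ i j, i < j → j < p.length + q.length →
      (p.append q.reverse).getVert i ≠ (p.append q.reverse).getVert j by
    intro i hi j hj hij
    simp only [Set.mem_ofPred_eq, length_append, length_reverse] at hi hj
    by_contra hne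
    rcases Nat.lt_or_gt_of_ne hne with h | h
    exacts [this i j h hj hij, this j i h hi hij.symm]
  intro i j hij hj heq
  by_cases hjp : j ≤ p.length
  · rw [getVert_append_reverse_of_le p q (by omega),
      getVert_append_reverse_of_le p q hjp] at heq
    exact hij.ne (hp.getVert_injOn (show i ≤ p.length by omega) hjp heq)
  by_cases hip : p.length ≤ i
  · rw [getVert_append_reverse_of_length_le p q hip,
      getVert_append_reverse_of_length_le p q (by omega)] at heq
    have := hq.getVert_injOn (show p.length + q.length - i ≤ q.length by omega)
      (show p.length + q.length - j ≤ q.length by omega) heq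
    omega
  rw [not_le] at hjp hip
  rw [getVert_append_reverse_of_le p q hip.le,
    getVert_append_reverse_of_length_le p q hjp.le] at heq
  rcases Nat.eq_zero_or_pos i with rfl | hi0
  · have := hq.getVert_injOn (show 0 ≤ q.length by omega)
      (show p.length + q.length - j ≤ q.length by omega)
      (q.getVert_zero.trans (p.getVert_zero.symm.trans heq))
    omega
  · exact Set.disjoint_left.mp hAB (hp.getVert_mem_of_support_subset hpA hi0 hip)
      (heq ▸ hq.getVert_mem_of_support_subset hqB (by omega) (by omega))

lemma adj_getVert_append_reverse (hAB : ∀ x ∈ A, ∀ y ∈ B, ¬G.Adj x y) (hp : p.IsInducedPath)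
    (hq : q.IsInducedPath) (hpA : ∀ x ∈ p.support, x ∈ insert u (insert v A))
    (hqB : ∀ x ∈ q.support, x ∈ insert u (insert v B)) {i j : ℕ} (hij : i + 1 < j)
    (hj : j < (p.append q.reverse).length)
    (hadj : G.Adj ((p.append q.reverse).getVert i) ((p.append q.reverse).getVert j)) :
    i = 0 ∧ j + 1 = (p.append q.reverse).length := by
  simp only [length_append, length_reverse] at hj ⊢
  by_cases hjp : j ≤ p.length
  · rw [getVert_append_reverse_of_le p q (by omega),
      getVert_append_reverse_of_le p q hjp] at hadj
    exact absurd hadj (hp.2 i j hij hjp)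
  by_cases hip : p.length ≤ i
  · rw [getVert_append_reverse_of_length_le p q hip,
      getVert_append_reverse_of_length_le p q (by omega)] at hadj
    exact absurd hadj.symm (hq.2 _ _ (by omega) (by omega))
  rw [not_le] at hjp hip
  rw [getVert_append_reverse_of_le p q hip.le,
    getVert_append_reverse_of_length_le p q hjp.le] at hadj
  rcases Nat.eq_zero_or_pos i with rfl | hi0
  · refine ⟨rfl, by_contra fun hne =>
      hq.2 0 (p.length + q.length - j) (by omega) (by omega) ?_⟩
    rw [getVert_zero]
    rwa [getVert_zero] at hadj
  · exact absurd hadj (hAB _ (hp.1.getVert_mem_of_support_subset hpA hi0 hip) _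
      (hq.1.getVert_mem_of_support_subset hqB (by omega) (by omega)))

end Walk

variable {V : Type} {H : SimpleGraph V} {U W S : Set V} {a b s t : V}

lemma Walk.isInducedCycle_getVert {u : V} (c : H.Walk u u)
    (hinj : Set.InjOn c.getVert {i | i < c.length})
    (hchord : ∀ i j, i + 1 < j → j < c.length → H.Adj (c.getVert i) (c.getVert j) →
      i = 0 ∧ j + 1 = c.length) :
    IsInducedCycle H c.length (fun i => c.getVert i) := by
  set k := c.length with hk
  have hsucc : ∀ i < k, H.Adj (c.getVert i) (c.getVert ((i + 1) % k)) := by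
    intro i hi
    have hadj := c.adj_getVert_succ hi
    rcases (by omega : i + 1 < k ∨ i + 1 = k) with h | h
    · rwa [Nat.mod_eq_of_lt h]
    · rw [h, Nat.mod_self, c.getVert_zero]
      rwa [h, hk, c.getVert_length] at hadj
  have hlt : ∀ i j, i < j → j < k → H.Adj (c.getVert i) (c.getVert j) →
      (i + 1) % k = j ∨ (j + 1) % k = i := by
    intro i j hij hj hadj
    rcases (by omega : j = i + 1 ∨ i + 1 < j) with rfl | h
    · exact Or.inl (Nat.mod_eq_of_lt hj)
    · obtain ⟨rfl, hj'⟩ := hchord i j h hj hadj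
      exact Or.inr (by rw [hj', Nat.mod_self])
  refine ⟨fun a b hab => Fin.ext (hinj a.2 b.2 hab), fun a b => ⟨fun hadj => ?_, ?_⟩⟩
  · rcases lt_trichotomy (a : ℕ) b with hab | hab | hab
    · exact hlt _ _ hab b.2 hadj
    · exact absurd hadj (by rw [Fin.ext hab]; exact H.loopless.irrefl _)
    · exact (hlt _ _ hab a.2 hadj.symm).symm
  · rintro (h | h)
    · simpa only [h] using hsucc a a.2
    · simpa only [h] using (hsucc b b.2).symm

theorem _root_.Chordal.adj_of_separated_inducedPaths (hch : Chordal H) {A B : Set V}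
    (hAB : Disjoint A B) (hAB' : ∀ x ∈ A, ∀ y ∈ B, ¬H.Adj x y) (hst : s ≠ t)
    {p q : H.Walk s t} (hp : p.IsInducedPath) (hq : q.IsInducedPath)
    (hpA : ∀ x ∈ p.support, x ∈ insert s (insert t A))
    (hqB : ∀ x ∈ q.support, x ∈ insert s (insert t B)) : H.Adj s t := by
  by_contra hnadj
  have hla := p.two_le_length_of_not_adj hst hnadj
  have hlb := q.two_le_length_of_not_adj hst hnadj
  have hlen : 4 ≤ (p.append q.reverse).length := by
    simp only [Walk.length_append, Walk.length_reverse]; omega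
  exact hch _ hlen _ ((p.append q.reverse).isInducedCycle_getVert
    (Walk.injOn_getVert_append_reverse hAB hp.1 hq.1 hpA hqB)
    fun _ _ hij hj => Walk.adj_getVert_append_reverse hAB' hp hq hpA hqB hij hj)

def IsSimplicialIn (H : SimpleGraph V) (W : Set V) (x : V) : Prop :=
  H.IsClique (H.neighborSet x ∩ W)

lemma disjoint_reachableSet_of_not_reachable (hab : ¬(H.restrict U).Reachable a b) :
    Disjoint {x | (H.restrict U).Reachable a x} {y | (H.restrict U).Reachable b y} :=
  Set.disjoint_left.mpr fun _ hx hy => hab (hx.trans hy.symm)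

lemma not_adj_of_not_reachable (hab : ¬(H.restrict U).Reachable a b) (ha : a ∈ U) (hb : b ∈ U)
    {x y : V} (hx : (H.restrict U).Reachable a x) (hy : (H.restrict U).Reachable b y) :
    ¬H.Adj x y := fun hxy =>
  hab <| hx.trans <| (Adj.reachable (G := H.restrict U)
    ⟨hxy, hx.mem_of_restrict ha, hy.mem_of_restrict hb⟩).trans hy.symm

lemma exists_minimal_separator [Finite V] (hab : a ≠ b) (hnadj : ¬H.Adj a b) :
    ∃ S ⊆ W \ {a, b}, ¬(H.restrict (W \ S)).Reachable a b ∧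
      ∀ s ∈ S, (H.restrict (W \ (S \ {s}))).Reachable a b := by
  have htriv : ¬(H.restrict (W \ (W \ {a, b}))).Reachable a b := by
    refine fun hreach => hab (hreach.mem_of_adj_closed (C := {a}) ?_ rfl).symm
    rintro x y rfl ⟨hxy, -, hyW, hy⟩
    simp only [Set.mem_sdiff, hyW, Set.mem_insert_iff, Set.mem_singleton_iff, true_and,
      not_not] at hy
    rcases hy with rfl | rfl
    exacts [absurd hxy (H.loopless.irrefl _), absurd hxy hnadj]
  obtain ⟨S, ⟨hSab, hsep⟩, hmin⟩ := exists_minimal_of_wellFoundedLT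
    (fun S => S ⊆ W \ {a, b} ∧ ¬(H.restrict (W \ S)).Reachable a b)
    ⟨W \ {a, b}, subset_rfl, htriv⟩
  refine ⟨S, hSab, hsep, fun s hs => by_contra fun h => ?_⟩
  exact (hmin ⟨Set.sdiff_subset.trans hSab, h⟩ Set.sdiff_subset hs).2 rfl

/-- If `s` had no neighbour in the component of `a`, that component would still be closed in
`W \ (S \ {s})`. -/
lemma exists_adj_reachable_of_minimal_separator (hsep : ¬(H.restrict (W \ S)).Reachable a b)
    (hs : s ∈ S) (hmin : (H.restrict (W \ (S \ {s}))).Reachable a b) (ha : a ∈ W \ S) :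
    ∃ x, H.Adj s x ∧ (H.restrict (W \ S)).Reachable a x := by
  by_contra! hno
  refine hsep (hmin.mem_of_adj_closed (C := {v | (H.restrict (W \ S)).Reachable a v}) ?_
    (Reachable.refl a))
  rintro x y hx ⟨hxy, -, hyW, hyS⟩
  have hy : y ∉ S := by
    intro hy
    obtain rfl : y = s := by_contra fun hne => hyS ⟨hy, hne⟩
    exact hno x hxy.symm hx
  exact hx.trans (Adj.reachable ⟨hxy, hx.mem_of_restrict ha, hyW, hy⟩)

lemma reachable_through_reachableSet {c x y : V} (hsx : H.Adj s x)
    (hx : (H.restrict U).Reachable c x) (hty : H.Adj t y) (hy : (H.restrict U).Reachable c y) :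
    (H.restrict (insert s (insert t {v | (H.restrict U).Reachable c v}))).Reachable s t := by
  set C := {v | (H.restrict U).Reachable c v}
  have hxy : (H.restrict (insert s (insert t C))).Reachable x y :=
    ((hx.symm.trans hy).restrict_reachableSet hx).mono
      (restrict_mono ((Set.subset_insert _ _).trans (Set.subset_insert _ _)))
  have hsx' : (H.restrict (insert s (insert t C))).Adj s x :=
    ⟨hsx, Or.inl rfl, Or.inr (Or.inr hx)⟩
  have hyt : (H.restrict (insert s (insert t C))).Adj y t :=
    ⟨hty.symm, Or.inr (Or.inr hy), Or.inr (Or.inl rfl)⟩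
  exact hsx'.reachable.trans (hxy.trans hyt.reachable)

theorem _root_.Chordal.isClique_of_minimal_separator (hch : Chordal H) (ha : a ∈ W \ S)
    (hb : b ∈ W \ S) (hsep : ¬(H.restrict (W \ S)).Reachable a b)
    (hmin : ∀ s ∈ S, (H.restrict (W \ (S \ {s}))).Reachable a b) : H.IsClique S := by
  intro s hs t ht hst
  have hsep' : ¬(H.restrict (W \ S)).Reachable b a := fun h => hsep h.symm
  obtain ⟨x, hsx, hax⟩ := exists_adj_reachable_of_minimal_separator hsep hs (hmin s hs) ha
  obtain ⟨x', htx', hax'⟩ := exists_adj_reachable_of_minimal_separator hsep ht (hmin t ht) ha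
  obtain ⟨y, hsy, hby⟩ :=
    exists_adj_reachable_of_minimal_separator hsep' hs (hmin s hs).symm hb
  obtain ⟨y', hty', hby'⟩ :=
    exists_adj_reachable_of_minimal_separator hsep' ht (hmin t ht).symm hb
  obtain ⟨p, hp, hpA⟩ := (reachable_through_reachableSet hsx hax htx' hax')
    |>.exists_isInducedPath_restrict (Set.mem_insert _ _)
  obtain ⟨q, hq, hqB⟩ := (reachable_through_reachableSet hsy hby hty' hby')
    |>.exists_isInducedPath_restrict (Set.mem_insert _ _)
  exact hch.adj_of_separated_inducedPaths (disjoint_reachableSet_of_not_reachable hsep)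
    (fun _ hx _ hy => not_adj_of_not_reachable hsep ha hb hx hy) hst hp hq hpA hqB

lemma exists_isSimplicialIn_of_clique_separator
    (ih : ∀ W' ⊂ W, ¬H.IsClique W' → ∃ x ∈ W', ∃ y ∈ W', x ≠ y ∧ ¬H.Adj x y ∧
      H.IsSimplicialIn W' x ∧ H.IsSimplicialIn W' y)
    (hSW : S ⊆ W) (hS : H.IsClique S) (ha : a ∈ W \ S) (hb : b ∈ W \ S)
    (hsep : ¬(H.restrict (W \ S)).Reachable a b) :
    ∃ x, (H.restrict (W \ S)).Reachable a x ∧ H.IsSimplicialIn W x := by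
  set A := {x | (H.restrict (W \ S)).Reachable a x}
  have hnbr : ∀ x ∈ A, H.neighborSet x ∩ W ⊆ A ∪ S := by
    rintro x hx y ⟨hxy, hyW⟩
    by_cases hyS : y ∈ S
    · exact Or.inr hyS
    · exact Or.inl (hx.trans (Adj.reachable ⟨hxy, hx.mem_of_restrict ha, hyW, hyS⟩))
  have hlift (x) (hx : x ∈ A) (h : H.IsSimplicialIn (A ∪ S) x) : H.IsSimplicialIn W x :=
    IsClique.subset (s := H.neighborSet x ∩ (A ∪ S)) (fun _ hy => ⟨hy.1, hnbr x hx hy⟩) h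
  by_cases hcl : H.IsClique (A ∪ S)
  · exact ⟨a, .refl a, hcl.subset (hnbr a (.refl a))⟩
  have hAS : A ∪ S ⊂ W := by
    refine (Set.ssubset_iff_of_subset (Set.union_subset
      (fun x hx => (hx.mem_of_restrict ha).1) hSW)).mpr ⟨b, hb.1, ?_⟩
    rintro (h | h)
    exacts [hsep h, hb.2 h]
  obtain ⟨x, hx, y, hy, hxy, hnxy, hsx, hsy⟩ := ih _ hAS hcl
  by_cases hxA : x ∈ A
  · exact ⟨x, hxA, hlift x hxA hsx⟩
  have hyA : y ∈ A := hy.resolve_right fun hyS => hnxy (hS (hx.resolve_left hxA) hyS hxy)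
  exact ⟨y, hyA, hlift y hyA hsy⟩

theorem _root_.Chordal.exists_isSimplicialIn_of_not_isClique [Finite V] (hch : Chordal H)
    (hW : ¬H.IsClique W) :
    ∃ x ∈ W, ∃ y ∈ W, x ≠ y ∧ ¬H.Adj x y ∧ H.IsSimplicialIn W x ∧ H.IsSimplicialIn W y := by
  induction W using WellFoundedLT.induction with
  | _ W ih =>
  obtain ⟨a, ha, b, hb, hab, hnadj⟩ : ∃ a ∈ W, ∃ b ∈ W, a ≠ b ∧ ¬H.Adj a b := by
    simpa [IsClique, Set.Pairwise] using hW
  obtain ⟨S, hSab, hsep, hmin⟩ := exists_minimal_separator (H := H) (W := W) hab hnadj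
  have haS : a ∈ W \ S := ⟨ha, fun h => (hSab h).2 (Or.inl rfl)⟩
  have hbS : b ∈ W \ S := ⟨hb, fun h => (hSab h).2 (Or.inr rfl)⟩
  have hS := hch.isClique_of_minimal_separator haS hbS hsep hmin
  have hSW : S ⊆ W := hSab.trans Set.sdiff_subset
  obtain ⟨x, hax, hx⟩ := exists_isSimplicialIn_of_clique_separator ih hSW hS haS hbS hsep
  obtain ⟨y, hby, hy⟩ :=
    exists_isSimplicialIn_of_clique_separator ih hSW hS hbS haS fun h => hsep h.symm
  refine ⟨x, (hax.mem_of_restrict haS).1, y, (hby.mem_of_restrict hbS).1, ?_,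
    not_adj_of_not_reachable hsep haS hbS hax hby, hx, hy⟩
  rintro rfl
  exact Set.disjoint_left.mp (disjoint_reachableSet_of_not_reachable hsep) hax hby

theorem isMinimalVertexCover_neighborSet {G : SimpleGraph V} {x : V}
    (hx : Gᶜ.IsSimplicialIn Set.univ x) : IsMinimalVertexCover G (G.neighborSet x) := by
  have hnbr {u : V} (hu : u ∉ G.neighborSet x) (hux : u ≠ x) :
      u ∈ Gᶜ.neighborSet x ∩ Set.univ :=
    ⟨(G.compl_adj x u).mpr ⟨hux.symm, hu⟩, Set.mem_univ u⟩
  refine ⟨fun u v huv => ?_, fun C hC hcover => hC.antisymm fun v hv => ?_⟩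
  · by_contra! h
    rcases eq_or_ne u x with rfl | hux
    · exact h.2 huv
    rcases eq_or_ne v x with rfl | hvx
    · exact h.1 huv.symm
    exact ((G.compl_adj u v).mp (hx (hnbr h.1 hux) (hnbr h.2 hvx) huv.ne)).2 huv
  · exact (hcover hv).resolve_left fun hxC => G.loopless.irrefl x (hC hxC)

end SimpleGraph

/-- If `G` is a simple graph with at least one edge whose complement is chordal,
then there are two adjacent vertices `x`, `y` whose neighborhoods are both minimal vertex
covers of `G`. -/
theorem stmt18 {n : ℕ} (G : SimpleGraph (Fin n)) (hne : ∃ x y : Fin n, G.Adj x y)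
    (hch : Chordal Gᶜ) :
    ∃ x y : Fin n, G.Adj x y ∧ IsMinimalVertexCover G (G.neighborSet x) ∧
      IsMinimalVertexCover G (G.neighborSet y) := by
  obtain ⟨x₀, y₀, h₀⟩ := hne
  have hncl : ¬Gᶜ.IsClique Set.univ := fun h =>
    ((G.compl_adj x₀ y₀).mp (h (Set.mem_univ x₀) (Set.mem_univ y₀) h₀.ne)).2 h₀
  obtain ⟨x, -, y, -, hxy, hnadj, hx, hy⟩ := hch.exists_isSimplicialIn_of_not_isClique hncl
  have hadj : G.Adj x y := by simpa [SimpleGraph.compl_adj, hxy] using hnadj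
  exact ⟨x, y, hadj, SimpleGraph.isMinimalVertexCover_neighborSet hx,
    SimpleGraph.isMinimalVertexCover_neighborSet hy⟩
end
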